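/- arXiv:1812.10725 — 3 statements merged into one kernel-verified Lean document; each statement's English description precedes it below -/
import Mathlib

section
/- Let O be the ring of integers of a real quadratic field and M = {A ∈ SL₂(O) : a + d ∈ 2O and b + c ∈ 2O} where A = [[a,b],[c,d]]. The map sending (A,B,C,D) ∈ O⁴ with A² + B² = C² + D² + 1 to the matrix [[A+C, B+D],[D-B, A-C]] is a bijection from {(A,B,C,D) ∈ O⁴ : A² + B² = C² + D² + 1} onto M. -/
/-!
The map is `(A, B, C, D) ↦ A • 1 + C • σ₃ + B • J + D • σ₁`, with `σ₃ = diag(1, -1)`,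
`σ₁ = !![0, 1; 1, 0]` and `J = !![0, 1; -1, 0]`, so its determinant is the form
`A² + B² - C² - D²`. Every image has `a + d = 2A` and `b + c = 2D`, so any matrix with these
sums even has a preimage, which is unique as soon as `2` is a non-zero-divisor.
-/

/-- The ring of integers of `ℚ(√D)`, realized as a subring of `ℝ`. -/
noncomputable def Oring (D : ℕ) : Subring ℝ :=
  Subring.closure {if D % 4 = 1 then (1 + Real.sqrt D) / 2 else Real.sqrt D}

namespace QuaternaryMatrix

variable {R : Type*} [CommRing R]

def toMatrix (q : R × R × R × R) : Matrix (Fin 2) (Fin 2) R :=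
  !![q.1 + q.2.2.1, q.2.1 + q.2.2.2; q.2.2.2 - q.2.1, q.1 - q.2.2.1]

theorem det_toMatrix (q : R × R × R × R) :
    (toMatrix q).det = q.1 ^ 2 + q.2.1 ^ 2 - (q.2.2.1 ^ 2 + q.2.2.2 ^ 2) := by
  rw [toMatrix, Matrix.det_fin_two_of]
  ring

theorem two_dvd_toMatrix_diag (q : R × R × R × R) :
    (2 : R) ∣ toMatrix q 0 0 + toMatrix q 1 1 :=
  ⟨q.1, by simp [toMatrix]; ring⟩

theorem two_dvd_toMatrix_antidiag (q : R × R × R × R) :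
    (2 : R) ∣ toMatrix q 0 1 + toMatrix q 1 0 :=
  ⟨q.2.2.2, by simp [toMatrix]; ring⟩

theorem toMatrix_injective (h2 : IsLeftRegular (2 : R)) :
    Function.Injective (toMatrix : R × R × R × R → Matrix (Fin 2) (Fin 2) R) := by
  rintro ⟨a, b, c, d⟩ ⟨a', b', c', d'⟩ h
  have h00 := congrFun₂ h 0 0
  have h01 := congrFun₂ h 0 1
  have h10 := congrFun₂ h 1 0
  have h11 := congrFun₂ h 1 1
  simp only [toMatrix, Matrix.of_apply, Matrix.cons_val', Matrix.cons_val_zero,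
    Matrix.cons_val_one, Matrix.empty_val', Matrix.cons_val_fin_one] at h00 h01 h10 h11
  have ha : a = a' := h2 (by linear_combination h00 + h11)
  have hb : b = b' := h2 (by linear_combination h01 - h10)
  have hc : c = c' := h2 (by linear_combination h00 - h11)
  have hd : d = d' := h2 (by linear_combination h01 + h10)
  rw [ha, hb, hc, hd]

theorem toMatrix_halves {M : Matrix (Fin 2) (Fin 2) R} {x y : R}
    (hx : M 0 0 + M 1 1 = 2 * x) (hy : M 0 1 + M 1 0 = 2 * y) :
    toMatrix (x, M 0 1 - y, x - M 1 1, y) = M := by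
  ext i j
  fin_cases i <;> fin_cases j <;> simp [toMatrix]
  · linear_combination -hx
  · linear_combination -hy

theorem bijOn_toMatrix (h2 : IsLeftRegular (2 : R)) :
    Set.BijOn toMatrix {q : R × R × R × R | q.1 ^ 2 + q.2.1 ^ 2 = q.2.2.1 ^ 2 + q.2.2.2 ^ 2 + 1}
      {M : Matrix (Fin 2) (Fin 2) R |
        M.det = 1 ∧ (2 : R) ∣ M 0 0 + M 1 1 ∧ (2 : R) ∣ M 0 1 + M 1 0} := by
  refine ⟨fun q (hq : _ = _) => ⟨?_, two_dvd_toMatrix_diag q, two_dvd_toMatrix_antidiag q⟩,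
    (toMatrix_injective h2).injOn, ?_⟩
  · rw [det_toMatrix, hq]
    ring
  · rintro M ⟨hdet, ⟨x, hx⟩, ⟨y, hy⟩⟩
    refine ⟨_, ?_, toMatrix_halves hx hy⟩
    rw [Matrix.det_fin_two] at hdet
    show x ^ 2 + (M 0 1 - y) ^ 2 = (x - M 1 1) ^ 2 + y ^ 2 + 1
    linear_combination hdet - M 1 1 * hx + M 0 1 * hy

end QuaternaryMatrix

theorem bijection_onto_M_general (D : ℕ) :
    Set.BijOn
      (fun q : Oring D × Oring D × Oring D × Oring D =>
        !![q.1 + q.2.2.1, q.2.1 + q.2.2.2; q.2.2.2 - q.2.1, q.1 - q.2.2.1])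
      {q : Oring D × Oring D × Oring D × Oring D |
        q.1 ^ 2 + q.2.1 ^ 2 = q.2.2.1 ^ 2 + q.2.2.2 ^ 2 + 1}
      {A : Matrix (Fin 2) (Fin 2) (Oring D) | A.det = 1
        ∧ (2 : Oring D) ∣ (A 0 0 + A 1 1) ∧ (2 : Oring D) ∣ (A 0 1 + A 1 0)} :=
  QuaternaryMatrix.bijOn_toMatrix (IsRegular.of_ne_zero two_ne_zero).left

/-- The map `(A,B,C,D) ↦ [[A+C, B+D],[D-B, A-C]]` is a bijection from
`{(A,B,C,D) ∈ O⁴ : A² + B² = C² + D² + 1}` onto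
`M = {γ ∈ SL₂(O) : a+d ∈ 2O, b+c ∈ 2O}`. -/
theorem bijection_onto_M (D : ℕ) (hD : 1 < D) (hsf : Squarefree D) :
    Set.BijOn
      (fun q : Oring D × Oring D × Oring D × Oring D =>
        !![q.1 + q.2.2.1, q.2.1 + q.2.2.2; q.2.2.2 - q.2.1, q.1 - q.2.2.1])
      {q : Oring D × Oring D × Oring D × Oring D |
        q.1 ^ 2 + q.2.1 ^ 2 = q.2.2.1 ^ 2 + q.2.2.2 ^ 2 + 1}
      {A : Matrix (Fin 2) (Fin 2) (Oring D) | A.det = 1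
        ∧ (2 : Oring D) ∣ (A 0 0 + A 1 1) ∧ (2 : Oring D) ∣ (A 0 1 + A 1 0)} :=
  bijection_onto_M_general D
end

section
/- Let C = S·T₁ where S = [[0,1],[-1,0]] and T₁ = [[1,1],[0,1]], viewed in SL₂(O) for O the ring of integers of Q(√D) with 8 ∤ D - 5. Then the conjugate C⁻¹ Γ₀(2O) C equals the group Γ' = {A = [[a,b],[c,d]] ∈ SL₂(O) : a+d ∈ 2O, b+c ∈ 2O}, where Γ₀(2O) is the set of matrices in SL₂(O) whose lower-left entry lies in 2O. -/
namespace QuadraticAlgebra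

variable {a b : ℤ}

theorem two_dvd_iff_intCast_zmod_eq_zero (z : QuadraticAlgebra ℤ a b) :
    2 ∣ z ↔ (z.re : ZMod 2) = 0 ∧ (z.im : ZMod 2) = 0 := by
  simp only [ZMod.intCast_zmod_eq_zero_iff_dvd, Nat.cast_ofNat]
  constructor
  · rintro ⟨w, rfl⟩
    exact ⟨⟨w.re, by simp⟩, ⟨w.im, by simp⟩⟩
  · rintro ⟨⟨x, hx⟩, ⟨y, hy⟩⟩
    exact ⟨⟨x, y⟩, by ext <;> simp [hx, hy]⟩

theorem two_dvd_add_of_two_dvd_mul_sub_one (hab : Even a ∨ Even b)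
    {u v : QuadraticAlgebra ℤ a b} (h : 2 ∣ u * v - 1) : 2 ∣ u + v := by
  rw [two_dvd_iff_intCast_zmod_eq_zero] at h ⊢
  rw [← ZMod.intCast_eq_zero_iff_even, ← ZMod.intCast_eq_zero_iff_even] at hab
  simp only [re_sub, im_sub, re_add, im_add, re_mul, im_mul, re_one, im_one] at h ⊢
  push_cast at h ⊢
  revert hab h
  generalize (a : ZMod 2) = a', (b : ZMod 2) = b'
  generalize (u.re : ZMod 2) = x, (u.im : ZMod 2) = y, (v.re : ZMod 2) = z, (v.im : ZMod 2) = w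
  revert a' b' x y z w
  decide

variable {θ : ℝ}

noncomputable def evalReal (h : θ * θ = a + b * θ) : QuadraticAlgebra ℤ a b →+* ℝ :=
  (lift (A := ℝ) ⟨θ, by simpa [zsmul_eq_mul] using h⟩ : QuadraticAlgebra ℤ a b →ₐ[ℤ] ℝ)

theorem evalReal_apply (h : θ * θ = a + b * θ) (z : QuadraticAlgebra ℤ a b) :
    evalReal h z = z.re + z.im * θ := by
  simp [evalReal, zsmul_eq_mul]

theorem evalReal_injective (hθ : Irrational θ) (h : θ * θ = a + b * θ) :
    Function.Injective (evalReal h) := by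
  refine (injective_iff_map_eq_zero _).2 fun z hz => ?_
  rw [evalReal_apply] at hz
  obtain him | him := eq_or_ne z.im 0
  · rw [him, Int.cast_zero, zero_mul, add_zero, Int.cast_eq_zero] at hz
    ext <;> assumption
  · exact absurd hz ((hθ.intCast_mul him).intCast_add z.re).ne_zero

theorem evalReal_range (h : θ * θ = a + b * θ) :
    (evalReal h).range = Subring.closure {θ} := by
  apply le_antisymm
  · rintro _ ⟨z, rfl⟩
    rw [evalReal_apply]
    exact add_mem (intCast_mem _ _) (mul_mem (intCast_mem _ _) (Subring.subset_closure rfl))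
  · exact Subring.closure_le.2 (Set.singleton_subset_iff.2 ⟨omega, by simp [evalReal_apply]⟩)

noncomputable def equivSubringClosure (hθ : Irrational θ) (h : θ * θ = a + b * θ) :
    QuadraticAlgebra ℤ a b ≃+* Subring.closure {θ} :=
  (RingEquiv.ofBijective (evalReal h).rangeRestrict
    ⟨fun _ _ hzw => evalReal_injective hθ h (congrArg Subtype.val hzw),
      (evalReal h).rangeRestrict_surjective⟩).trans (RingEquiv.subringCongr (evalReal_range h))

end QuadraticAlgebra

theorem irrational_sqrt_of_squarefree {D : ℕ} (hD : 1 < D) (hsf : Squarefree D) :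
    Irrational √D := by
  refine irrational_sqrt_natCast_iff.2 fun ⟨r, hr⟩ => ?_
  rw [hr, Nat.isUnit_iff.1 (hsf r (hr ▸ dvd_rfl))] at hD
  omega

namespace Oring

theorem exists_ringEquiv_quadraticAlgebra {D : ℕ} (hD : 1 < D) (hsf : Squarefree D)
    (h8 : D % 8 ≠ 5) :
    ∃ a b : ℤ, (Even a ∨ Even b) ∧ Nonempty (QuadraticAlgebra ℤ a b ≃+* Oring D) := by
  have hirr := irrational_sqrt_of_squarefree hD hsf
  by_cases h4 : D % 4 = 1
  · obtain ⟨k, rfl⟩ : ∃ k, D = 8 * k + 1 := ⟨D / 8, by omega⟩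
    rw [Oring, if_pos h4]
    refine ⟨2 * k, 1, .inl (even_two_mul _),
      ⟨QuadraticAlgebra.equivSubringClosure ?_ ?_⟩⟩
    · simpa using (hirr.intCast_add 1).div_natCast two_ne_zero
    · have hsq : √(8 * k + 1 : ℝ) * √(8 * k + 1 : ℝ) = 8 * k + 1 :=
        Real.mul_self_sqrt (by positivity)
      push_cast
      linear_combination hsq / 4
  · rw [Oring, if_neg h4]
    exact ⟨D, 0, .inr Even.zero, ⟨QuadraticAlgebra.equivSubringClosure hirr (by simp)⟩⟩

theorem two_dvd_add_of_two_dvd_mul_sub_one {D : ℕ} (hD : 1 < D) (hsf : Squarefree D)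
    (h8 : D % 8 ≠ 5) {u v : Oring D} (h : 2 ∣ u * v - 1) : 2 ∣ u + v := by
  obtain ⟨a, b, hab, ⟨e⟩⟩ := exists_ringEquiv_quadraticAlgebra hD hsf h8
  have h' := map_dvd e.symm h
  rw [map_ofNat, map_sub, map_mul, map_one] at h'
  have := map_dvd e (QuadraticAlgebra.two_dvd_add_of_two_dvd_mul_sub_one hab h')
  rwa [map_ofNat, map_add, e.apply_symm_apply, e.apply_symm_apply] at this

end Oring

section ConjGamma0

variable {R : Type*} [CommRing R]

open Matrix

theorem two_dvd_trace_of_det_eq_one (hR : ∀ u v : R, 2 ∣ u * v - 1 → 2 ∣ u + v)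
    {A : Matrix (Fin 2) (Fin 2) R} (hA : A.det = 1) (hA₁₀ : 2 ∣ A 1 0) : 2 ∣ A.trace := by
  rw [trace_fin_two]
  apply hR
  rw [det_fin_two] at hA
  obtain ⟨c, hc⟩ := hA₁₀
  exact ⟨A 0 1 * c, by linear_combination hA + A 0 1 * hc⟩

theorem conj_Gamma0_eq_of_two_dvd_add (hR : ∀ u v : R, 2 ∣ u * v - 1 → 2 ∣ u + v) :
    (letI C : Matrix (Fin 2) (Fin 2) R := !![0, 1; -1, 0] * !![1, 1; 0, 1]
    {B : Matrix (Fin 2) (Fin 2) R |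
      ∃ A : Matrix (Fin 2) (Fin 2) R,
        A.det = 1 ∧ (2 : R) ∣ A 1 0 ∧ B = C⁻¹ * A * C})
    = {B : Matrix (Fin 2) (Fin 2) R | B.det = 1
        ∧ (2 : R) ∣ (B 0 0 + B 1 1) ∧ (2 : R) ∣ (B 0 1 + B 1 0)} := by
  set C : Matrix (Fin 2) (Fin 2) R := !![0, 1; -1, 0] * !![1, 1; 0, 1]
  have hC : C = !![0, 1; -1, -1] := by simp [C]
  have hCinv : C⁻¹ = !![-1, -1; 1, 0] := inv_eq_right_inv (by simp [hC, one_fin_two])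
  clear_value C
  have hC_det : IsUnit C.det := by simp [hC, det_fin_two_of]
  have hC_unit : IsUnit C := (isUnit_iff_isUnit_det C).2 hC_det
  ext B
  constructor
  · rintro ⟨A, hA, hA₁₀, rfl⟩
    have htr := two_dvd_trace_of_det_eq_one hR hA hA₁₀
    have hdiag : (C⁻¹ * A * C) 0 0 + (C⁻¹ * A * C) 1 1 = A.trace := by
      rw [← trace_fin_two, trace_mul_cycle, mul_nonsing_inv C hC_det, Matrix.one_mul]
    have hoff : (C⁻¹ * A * C) 0 1 + (C⁻¹ * A * C) 1 0 = A.trace - 2 * A 0 0 - A 1 0 := by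
      rw [hCinv, hC]
      simp only [mul_apply, Fin.sum_univ_two, of_apply, cons_val', cons_val_zero, cons_val_one,
        cons_val_fin_one, trace_fin_two]
      ring
    refine ⟨by rw [det_conj' hC_unit, hA], hdiag ▸ htr, ?_⟩
    rw [hoff]
    exact (htr.sub (dvd_mul_right _ _)).sub hA₁₀
  · rintro ⟨hB, htr, hoff⟩
    have hlow : (C * B * C⁻¹) 1 0
        = (B 0 0 + B 1 1) + (B 0 1 + B 1 0) - 2 * (B 0 1 + B 1 1) := by
      rw [hCinv, hC]
      simp only [mul_apply, Fin.sum_univ_two, of_apply, cons_val', cons_val_zero, cons_val_one,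
        cons_val_fin_one]
      ring
    refine ⟨C * B * C⁻¹, by rw [det_conj hC_unit, hB], ?_, ?_⟩
    · rw [hlow]
      exact (htr.add hoff).sub (dvd_mul_right _ _)
    · rw [Matrix.mul_assoc C, nonsing_inv_mul_cancel_left C _ hC_det,
        nonsing_inv_mul_cancel_right C _ hC_det]

end ConjGamma0

/-- For `8 ∤ D - 5` and `C = S·T₁`, the conjugate `C⁻¹ Γ₀(2O) C` equals
`Γ = {γ ∈ SL₂(O) : a+d ∈ 2O, b+c ∈ 2O}`. -/
theorem conj_Gamma0_eq (D : ℕ) (hD : 1 < D) (hsf : Squarefree D)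
    (h8 : D % 8 ≠ 5) :
    (letI C : Matrix (Fin 2) (Fin 2) (Oring D) := !![0, 1; -1, 0] * !![1, 1; 0, 1]
    {B : Matrix (Fin 2) (Fin 2) (Oring D) |
      ∃ A : Matrix (Fin 2) (Fin 2) (Oring D),
        A.det = 1 ∧ (2 : Oring D) ∣ A 1 0 ∧ B = C⁻¹ * A * C})
    = {B : Matrix (Fin 2) (Fin 2) (Oring D) | B.det = 1
        ∧ (2 : Oring D) ∣ (B 0 0 + B 1 1) ∧ (2 : Oring D) ∣ (B 0 1 + B 1 0)} :=
  conj_Gamma0_eq_of_two_dvd_add fun _ _ => Oring.two_dvd_add_of_two_dvd_mul_sub_one hD hsf h8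
end

section
/- Let Γ_O be the full Hilbert modular group PSL₂(O) of Q(√D) and Γ the subgroup of classes of matrices [[a,b],[c,d]] ∈ SL₂(O) with a+d, b+c ∈ 2O, modulo ±Id. Then the index [Γ_O : Γ] equals 6 if D ≢ 1 mod 4, equals 9 if D ≡ 1 mod 8, and equals 15 if D ≡ 5 mod 8; equivalently [Γ_O : Γ] = 6 - 3χ(2) + 6χ(4) where χ is the Kronecker symbol mod Δ. -/
/-!
Write `O = ℤ[θ]` with `θ² = a + bθ`, so that `O/2O ≅ 𝔽₂[X]/(X² + bX + a)` is a ring with four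
elements: the dual numbers over `𝔽₂` when `b` is even (`D ≢ 1 mod 4`), `𝔽₂ × 𝔽₂` when `b` is odd
and `a` even (`D ≡ 1 mod 8`), and `𝔽₄` otherwise (`D ≡ 5 mod 8`). Over each of these rings every
matrix of determinant one is a product of four elementary matrices, so reduction
`SL₂(O) → SL₂(O/2O)` is onto. In characteristic two the conditions `2 ∣ a + d` and `2 ∣ b + c` say
that the reduction is circulant, `[[x, y], [y, x]]`, so `M` is the preimage of the circulant
subgroup; it contains the centre `±1`. Hence `[Γ_O : Γ]` is the index of the circulant subgroup
of `SL₂(O/2O)`, which is `48/8`, `36/4` or `60/4`.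
-/

open Matrix MatrixGroups

namespace Matrix.SpecialLinearGroup

variable {n R S : Type*} [Fintype n] [DecidableEq n] [CommRing R] [CommRing S]

variable (n R) in
def transvections : Set (SpecialLinearGroup n R) :=
  {A | ∃ (i j : n) (hij : i ≠ j) (b : R), transvection hij b = A}

theorem map_transvection (f : R →+* S) {i j : n} (hij : i ≠ j) (b : R) :
    map f (transvection hij b) = transvection hij (f b) := by
  ext k l
  simp [transvection_coe, one_apply, single_apply, apply_ite f]

theorem map_surjective_of_closure_transvections_eq_top {f : R →+* S}
    (hf : Function.Surjective f) (hS : Subgroup.closure (transvections n S) = ⊤) :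
    Function.Surjective (map (n := n) f) := by
  rw [← MonoidHom.range_eq_top, eq_top_iff, ← hS, Subgroup.closure_le]
  rintro _ ⟨i, j, hij, b, rfl⟩
  obtain ⟨r, rfl⟩ := hf b
  exact ⟨transvection hij r, map_transvection f hij r⟩

variable (R) in
def circulantSubgroup : Subgroup SL(2, R) where
  carrier := {A | A 0 0 = A 1 1 ∧ A 0 1 = A 1 0}
  one_mem' := by simp
  mul_mem' := by
    rintro A B ⟨hA₁, hA₂⟩ ⟨hB₁, hB₂⟩
    constructor <;>
      simp only [coe_mul, mul_apply, Fin.sum_univ_two, hA₁, hA₂, hB₁, hB₂] <;> ring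
  inv_mem' := by
    rintro A ⟨hA₁, hA₂⟩
    rw [SL2_inv_expl A]
    exact ⟨by simp [hA₁], by simp [hA₂]⟩

theorem mem_circulantSubgroup {A : SL(2, R)} :
    A ∈ circulantSubgroup R ↔ A 0 0 = A 1 1 ∧ A 0 1 = A 1 0 := Iff.rfl

instance [DecidableEq R] : DecidablePred (· ∈ circulantSubgroup R) :=
  fun _ => decidable_of_iff' _ mem_circulantSubgroup

theorem center_le_comap_circulantSubgroup (f : R →+* S) :
    Subgroup.center SL(2, R) ≤ (circulantSubgroup S).comap (map f) := by
  intro A hA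
  obtain ⟨r, -, hr⟩ := mem_center_iff.mp hA
  simp [mem_circulantSubgroup, ← hr]

theorem index_map_center_eq_index_circulantSubgroup (π : R →+* S)
    (hπ : ∀ x, π x = 0 ↔ 2 ∣ x) (hsurj : Function.Surjective (map (n := Fin 2) π))
    (M : Subgroup SL(2, R))
    (hM : ∀ A : SL(2, R), A ∈ M ↔ (2 ∣ A 0 0 + A 1 1 ∧ 2 ∣ A 0 1 + A 1 0)) :
    (M.map (QuotientGroup.mk' (Subgroup.center SL(2, R)))).index =
      (circulantSubgroup S).index := by
  have two_eq_zero : (2 : S) = 0 := by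
    rw [← map_ofNat π 2]
    exact (hπ 2).2 dvd_rfl
  have two_dvd_add_iff (x y : R) : 2 ∣ x + y ↔ π x = π y := by
    have neg_eq : -π y = π y :=
      neg_eq_of_add_eq_zero_right (by rw [← two_mul, two_eq_zero, zero_mul])
    rw [← hπ, map_add, add_eq_zero_iff_eq_neg, neg_eq]
  have hM' : M = (circulantSubgroup S).comap (map π) := by
    ext A
    simp only [hM, two_dvd_add_iff, Subgroup.mem_comap, mem_circulantSubgroup]
    rfl
  rw [Subgroup.index_map_eq _ (QuotientGroup.mk'_surjective _)
      (by rw [QuotientGroup.ker_mk', hM']; exact center_le_comap_circulantSubgroup π),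
    hM', Subgroup.index_comap_of_surjective _ hsurj]

end Matrix.SpecialLinearGroup

namespace QuadraticAlgebra

variable {R S : Type*} [CommRing R] [CommRing S] {a b : R}

def map (f : R →+* S) : QuadraticAlgebra R a b →+* QuadraticAlgebra S (f a) (f b) where
  toFun z := ⟨f z.re, f z.im⟩
  map_one' := by ext <;> simp
  map_mul' z w := by ext <;> simp
  map_zero' := by ext <;> simp
  map_add' z w := by ext <;> simp

@[simp] theorem re_map (f : R →+* S) (z : QuadraticAlgebra R a b) : (map f z).re = f z.re := rfl
@[simp] theorem im_map (f : R →+* S) (z : QuadraticAlgebra R a b) : (map f z).im = f z.im := rfl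

theorem map_surjective {f : R →+* S} (hf : Function.Surjective f) :
    Function.Surjective (map f : QuadraticAlgebra R a b →+* _) := by
  intro w
  obtain ⟨x, hx⟩ := hf w.re
  obtain ⟨y, hy⟩ := hf w.im
  exact ⟨⟨x, y⟩, QuadraticAlgebra.ext hx hy⟩

theorem two_dvd_iff {z : QuadraticAlgebra R a b} : 2 ∣ z ↔ 2 ∣ z.re ∧ 2 ∣ z.im := by
  constructor
  · rintro ⟨w, rfl⟩
    exact ⟨⟨w.re, by simp⟩, ⟨w.im, by simp⟩⟩
  · rintro ⟨⟨x, hx⟩, ⟨y, hy⟩⟩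
    exact ⟨⟨x, y⟩, by ext <;> simp [hx, hy]⟩

instance [Fintype R] : Fintype (QuadraticAlgebra R a b) :=
  Fintype.ofEquiv _ (equivProd a b).symm

section

open Matrix.SpecialLinearGroup (circulantSubgroup transvections)

variable (a b : ZMod 2)

theorem card_SL2_zmod_two :
    Nat.card SL(2, QuadraticAlgebra (ZMod 2) a b) =
      if b = 0 then 48 else if a = 0 then 36 else 60 := by
  rw [Nat.card_eq_fintype_card]
  revert a b
  decide +kernel

theorem card_circulantSubgroup_zmod_two :
    Nat.card (circulantSubgroup (QuadraticAlgebra (ZMod 2) a b)) = if b = 0 then 8 else 4 := by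
  rw [Nat.card_eq_fintype_card]
  revert a b
  decide +kernel

theorem index_circulantSubgroup_zmod_two :
    (circulantSubgroup (QuadraticAlgebra (ZMod 2) a b)).index =
      if b = 0 then 6 else if a = 0 then 9 else 15 := by
  have h := Subgroup.index_mul_card (circulantSubgroup (QuadraticAlgebra (ZMod 2) a b))
  rw [card_SL2_zmod_two, card_circulantSubgroup_zmod_two] at h
  split_ifs at h ⊢ <;> omega

theorem exists_eq_prod_four_transvections_zmod_two (A : SL(2, QuadraticAlgebra (ZMod 2) a b)) :
    ∃ x y z t, A = SpecialLinearGroup.transvection zero_ne_one x *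
        SpecialLinearGroup.transvection one_ne_zero y *
        SpecialLinearGroup.transvection zero_ne_one z *
        SpecialLinearGroup.transvection one_ne_zero t := by
  revert a b A
  decide +kernel

theorem closure_transvections_zmod_two :
    Subgroup.closure (transvections (Fin 2) (QuadraticAlgebra (ZMod 2) a b)) = ⊤ := by
  refine eq_top_iff.mpr fun A _ => ?_
  obtain ⟨x, y, z, t, rfl⟩ := exists_eq_prod_four_transvections_zmod_two a b A
  refine mul_mem (mul_mem (mul_mem ?_ ?_) ?_) ?_ <;>
    exact Subgroup.subset_closure ⟨_, _, _, _, rfl⟩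

end

section

variable {θ : ℝ} {a b : ℤ}

theorem map_intCast_zmod_two_eq_zero_iff (z : QuadraticAlgebra ℤ a b) :
    map (Int.castRingHom (ZMod 2)) z = 0 ↔ 2 ∣ z := by
  rw [QuadraticAlgebra.ext_iff, re_map, im_map, two_dvd_iff]
  simp [ZMod.intCast_zmod_eq_zero_iff_dvd]

noncomputable def embedReal (hθ : θ ^ 2 = a + b * θ) : QuadraticAlgebra ℤ a b →+* ℝ :=
  (lift ⟨θ, by rw [← sq, hθ]; simp⟩ : QuadraticAlgebra ℤ a b →ₐ[ℤ] ℝ).toRingHom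

theorem embedReal_apply (hθ : θ ^ 2 = a + b * θ) (z : QuadraticAlgebra ℤ a b) :
    embedReal hθ z = z.re + z.im * θ := by
  simp [embedReal]

theorem range_embedReal (hθ : θ ^ 2 = a + b * θ) :
    (embedReal hθ).range = Subring.closure {θ} := by
  refine le_antisymm ?_ (Subring.closure_le.mpr ?_)
  · rintro _ ⟨z, rfl⟩
    rw [embedReal_apply]
    exact add_mem (intCast_mem _ _)
      (mul_mem (intCast_mem _ _) (Subring.subset_closure rfl))
  · rintro _ rfl
    exact ⟨ω, by simp [embedReal_apply]⟩

theorem embedReal_injective (hθ : θ ^ 2 = a + b * θ) (hirr : Irrational θ) :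
    Function.Injective (embedReal hθ) := by
  refine (injective_iff_map_eq_zero _).mpr fun z hz => ?_
  rw [embedReal_apply] at hz
  have him : z.im = 0 := by
    by_contra h
    refine hirr.ne_rational (-z.re) z.im ?_
    field_simp
    push_cast
    linarith
  have hre : z.re = 0 := by simpa [him] using hz
  exact QuadraticAlgebra.ext hre him

noncomputable def ringEquivOfEqClosure (hθ : θ ^ 2 = a + b * θ) (hirr : Irrational θ)
    {R : Subring ℝ} (hR : R = Subring.closure {θ}) : R ≃+* QuadraticAlgebra ℤ a b :=
  (RingEquiv.subringCongr (hR.trans (range_embedReal hθ).symm)).trans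
    (RingEquiv.ofBijective (embedReal hθ).rangeRestrict
      ⟨fun _ _ h => embedReal_injective hθ hirr (congrArg Subtype.val h),
        (embedReal hθ).rangeRestrict_surjective⟩).symm

end

end QuadraticAlgebra

open SpecialLinearGroup QuadraticAlgebra in
theorem index_map_center_of_quadratic {θ : ℝ} {a b : ℤ} (hθ : θ ^ 2 = a + b * θ)
    (hirr : Irrational θ) (R : Subring ℝ) (hR : R = Subring.closure {θ})
    (M : Subgroup SL(2, R))
    (hM : ∀ A : SL(2, R), A ∈ M ↔ (2 ∣ A 0 0 + A 1 1 ∧ 2 ∣ A 0 1 + A 1 0)) :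
    (M.map (QuotientGroup.mk' (Subgroup.center SL(2, R)))).index =
      if (b : ZMod 2) = 0 then 6 else if (a : ZMod 2) = 0 then 9 else 15 := by
  let e := ringEquivOfEqClosure hθ hirr hR
  let π := (QuadraticAlgebra.map (Int.castRingHom (ZMod 2))).comp e.toRingHom
  have hπ (x : R) : π x = 0 ↔ 2 ∣ x := by
    rw [← map_dvd_iff e, map_ofNat]
    exact map_intCast_zmod_two_eq_zero_iff (e x)
  have hsurj : Function.Surjective (SpecialLinearGroup.map (n := Fin 2) π) :=
    map_surjective_of_closure_transvections_eq_top
      ((QuadraticAlgebra.map_surjective (ZMod.intCast_surjective)).comp e.surjective)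
      (closure_transvections_zmod_two _ _)
  rw [index_map_center_eq_index_circulantSubgroup π hπ hsurj M hM,
    index_circulantSubgroup_zmod_two]
  simp

theorem Squarefree.isUnit_of_isSquare {α : Type*} [Monoid α] {x : α} (hx : Squarefree x)
    (h : IsSquare x) : IsUnit x := by
  obtain ⟨r, rfl⟩ := h
  exact (hx r dvd_rfl).mul (hx r dvd_rfl)

theorem one_add_sqrt_div_two_sq {D : ℕ} (h4 : D % 4 = 1) :
    ((1 + √D) / 2) ^ 2 = (((D - 1) / 4 : ℕ) : ℤ) + (1 : ℤ) * ((1 + √D) / 2) := by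
  have hcast : (((D - 1) / 4 : ℕ) : ℝ) = (D - 1) / 4 := by
    rw [Nat.cast_div (by omega) (by norm_num), Nat.cast_sub (by omega)]
    norm_num
  rw [Int.cast_natCast, hcast, Int.cast_one]
  linear_combination Real.sq_sqrt D.cast_nonneg / 4

/-- The index in the full Hilbert modular group `Γ_O = PSL₂(O)` of the image of
`M = {γ ∈ SL₂(O) : a+d ∈ 2O, b+c ∈ 2O}` equals `6` if `D ≢ 1 (mod 4)`,
`9` if `D ≡ 1 (mod 8)` and `15` if `D ≡ 5 (mod 8)`. -/
theorem index_Gamma (D : ℕ) (hD : 1 < D) (hsf : Squarefree D)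
    (M : Subgroup (Matrix.SpecialLinearGroup (Fin 2) (Oring D)))
    (hM : ∀ A : Matrix.SpecialLinearGroup (Fin 2) (Oring D),
      A ∈ M ↔ ((2 : Oring D) ∣ (A 0 0 + A 1 1) ∧ (2 : Oring D) ∣ (A 0 1 + A 1 0))) :
    (M.map (QuotientGroup.mk'
        (Subgroup.center (Matrix.SpecialLinearGroup (Fin 2) (Oring D))))).index
      = if D % 4 ≠ 1 then 6 else if D % 8 = 1 then 9 else 15 := by
  have hirr : Irrational √D := irrational_sqrt_natCast_iff.mpr fun hsq =>
    hD.ne' (Nat.isUnit_iff.mp (hsf.isUnit_of_isSquare hsq))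
  by_cases h4 : D % 4 = 1
  · have hirr' : Irrational ((1 + √D) / 2) := by
      simpa using (hirr.natCast_add 1).div_natCast (m := 2) two_ne_zero
    rw [index_map_center_of_quadratic (one_add_sqrt_div_two_sq h4) hirr' (Oring D)
      (by rw [Oring, if_pos h4]) M hM]
    have hmod8 : ((((D - 1) / 4 : ℕ) : ℤ) : ZMod 2) = 0 ↔ D % 8 = 1 := by
      rw [Int.cast_natCast, ZMod.natCast_eq_zero_iff]
      omega
    simp only [hmod8, h4, Int.cast_one, one_ne_zero, ne_eq, not_true_eq_false, if_false]
  · have hθ : √D ^ 2 = (D : ℤ) + (0 : ℤ) * √D := by simp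
    rw [index_map_center_of_quadratic hθ hirr (Oring D) (by rw [Oring, if_neg h4]) M hM]
    simp [h4]
end
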